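/- In every 2×2 subsquare (α β / γ δ) of a K-theory growth diagram (so γ ⊆ α ⊆ β and γ ⊆ δ ⊆ β), each of the skew shapes α/γ, β/α, β/δ, δ/γ is a collection of boxes with no two in the same row or column, and δ equals the shape obtained by applying the K-jdt slide K-jdt_{α/γ} to the filling of β/α by all 1's; in particular δ is uniquely determined by γ, α, β, and symmetrically α is uniquely determined by γ, δ, β. -/

import Mathlib

open Finset
open scoped Classical

/-- A box of a Young diagram: (row, column), rows increasing downward. -/
abbrev Box : Type := ℕ × ℕ

/-- A Young diagram: a finite lower set in both coordinates. -/
def IsYoung (μ : Finset Box) : Prop :=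
  (∀ r c : ℕ, (r + 1, c) ∈ μ → (r, c) ∈ μ) ∧
  (∀ r c : ℕ, (r, c + 1) ∈ μ → (r, c) ∈ μ)

/-- Two boxes are adjacent (share an edge). -/
def adjB (a b : Box) : Prop :=
  (a.1 = b.1 ∧ (a.2 + 1 = b.2 ∨ b.2 + 1 = a.2)) ∨
  (a.2 = b.2 ∧ (a.1 + 1 = b.1 ∨ b.1 + 1 = a.1))

/-- Connectivity within a finite set of boxes. -/
def conn (S : Finset Box) (a b : Box) : Prop :=
  Relation.ReflTransGen (fun x y => x ∈ S ∧ y ∈ S ∧ adjB x y) a b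

/-- Entries strictly increase along rows and columns. -/
def IncreasingOn (dom : Finset Box) (f : Box → ℕ) : Prop :=
  (∀ r c : ℕ, (r, c) ∈ dom → (r, c + 1) ∈ dom → f (r, c) < f (r, c + 1)) ∧
  (∀ r c : ℕ, (r, c) ∈ dom → (r + 1, c) ∈ dom → f (r, c) < f (r + 1, c))

def maxEntry (dom : Finset Box) (f : Box → ℕ) : ℕ := dom.sup f

/-- An increasing tableau: positive entries, strictly increasing along rows and
columns, and every value `1,…,max` appears at least once. -/
def IsIncTab (dom : Finset Box) (f : Box → ℕ) : Prop :=
  IncreasingOn dom f ∧ (∀ b ∈ dom, 1 ≤ f b) ∧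
  (∀ v : ℕ, 1 ≤ v → v ≤ maxEntry dom f → ∃ b ∈ dom, f b = v)

/-- A standard Young tableau: an increasing tableau with distinct entries. -/
def IsSYT (dom : Finset Box) (f : Box → ℕ) : Prop :=
  IsIncTab dom f ∧ ∀ a ∈ dom, ∀ b ∈ dom, f a = f b → a = b

/-- An inner corner of `λ`: a maximally southeast box of `λ`. -/
def InnerCorner (lam : Finset Box) (x : Box) : Prop :=
  x ∈ lam ∧ (x.1 + 1, x.2) ∉ lam ∧ (x.1, x.2 + 1) ∉ lam

/-- An outer corner of `ν`: a maximally northwest box outside `ν`. -/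
def OuterCorner (nu : Finset Box) (x : Box) : Prop :=
  x ∉ nu ∧ (x.1 = 0 ∨ (x.1 - 1, x.2) ∈ nu) ∧ (x.2 = 0 ∨ (x.1, x.2 - 1) ∈ nu)

/-- No two boxes of `A` share a row or a column. -/
def NoTwoSameRowCol (A : Finset Box) : Prop :=
  ∀ a ∈ A, ∀ b ∈ A, a ≠ b → a.1 ≠ b.1 ∧ a.2 ≠ b.2

/-- One `switch` stage of a K-jdt slide: in the union of ribbons formed by the
•-boxes (`st.1`) and the boxes of the numerical region `st.2.1` with entry `i`,
swap the two symbols on every connected component with at least two boxes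
(single-box components are unchanged).  The state is (dots, numerical domain,
numerical entries). -/
noncomputable def switchStep (st : Finset Box × Finset Box × (Box → ℕ)) (i : ℕ) :
    Finset Box × Finset Box × (Box → ℕ) :=
  let dots := st.1
  let dom := st.2.1
  let f := st.2.2
  let S : Finset Box := dots ∪ dom.filter (fun b => f b = i)
  let sw : Box → Prop := fun b => ∃ b' ∈ S, b' ≠ b ∧ conn S b b'
  ( dom.filter (fun b => f b = i ∧ sw b) ∪ dots.filter (fun b => ¬ sw b),
    dom.filter (fun b => ¬ (f b = i ∧ sw b)) ∪ dots.filter sw,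
    fun b => if b ∈ dots ∧ sw b then i else f b )

/-- The state of a K-jdt slide started with •'s at `xs`, after processing the
values `1, 2, …, m`. -/
noncomputable def KState (xs dom : Finset Box) (f : Box → ℕ) (m : ℕ) :
    Finset Box × Finset Box × (Box → ℕ) :=
  (List.range m).foldl (fun st i => switchStep st (i + 1)) (xs, dom, f)

/-- The K-theoretic jeu de taquin slide of the tableau `(dom, f)` into the set
`xs` of inner corners: process the values `1,…,max` and discard the final •'s. -/
noncomputable def KJdt (xs dom : Finset Box) (f : Box → ℕ) : Finset Box × (Box → ℕ) :=
  ((KState xs dom f (maxEntry dom f)).2.1, (KState xs dom f (maxEntry dom f)).2.2)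

/-- The state of a reverse K-jdt slide: •'s start at `xs` (outer corners) and the
values `m, m-1, …, 1` are processed in decreasing order. -/
noncomputable def KRevState (xs dom : Finset Box) (f : Box → ℕ) (m : ℕ) :
    Finset Box × Finset Box × (Box → ℕ) :=
  (List.range m).foldr (fun i st => switchStep st (i + 1)) (xs, dom, f)

/-- A slide applied to the state (inner shape `λ`, tableau domain, entries). -/
noncomputable def doSlide (st : Finset Box × Finset Box × (Box → ℕ)) (xs : Finset Box) :
    Finset Box × Finset Box × (Box → ℕ) :=
  (st.1 \ xs, (KJdt xs st.2.1 st.2.2).1, (KJdt xs st.2.1 st.2.2).2)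

/-- A reverse slide applied to the state (inner shape `λ`, tableau domain, entries). -/
noncomputable def doRevSlide (st : Finset Box × Finset Box × (Box → ℕ)) (xs : Finset Box) :
    Finset Box × Finset Box × (Box → ℕ) :=
  (st.1 \ (KRevState xs st.2.1 st.2.2 (maxEntry st.2.1 st.2.2)).1,
   (KRevState xs st.2.1 st.2.2 (maxEntry st.2.1 st.2.2)).2.1,
   (KRevState xs st.2.1 st.2.2 (maxEntry st.2.1 st.2.2)).2.2)

/-- One step of a rectification: a K-jdt slide into a nonempty set of inner corners. -/
def RectStep (p q : Finset Box × Finset Box × (Box → ℕ)) : Prop :=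
  ∃ xs : Finset Box, xs.Nonempty ∧ (∀ x ∈ xs, InnerCorner p.1 x) ∧ q = doSlide p xs

/-- The tableau `(dom, f)` of shape `ν/λ` admits a rectification order ending at
the straight-shape tableau `(dom', f')`. -/
def RectTo (lam dom : Finset Box) (f : Box → ℕ) (dom' : Finset Box) (f' : Box → ℕ) : Prop :=
  ∃ g : Box → ℕ, Relation.ReflTransGen RectStep (lam, dom, f) (∅, dom', g) ∧
    ∀ b ∈ dom', g b = f' b

def rowLen (μ : Finset Box) (r : ℕ) : ℕ := (μ.filter (fun b => b.1 = r)).card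

/-- The superstandard tableau of straight shape `μ`: rows filled consecutively. -/
def sstd (μ : Finset Box) : Box → ℕ :=
  fun b => (∑ i ∈ Finset.range b.1, rowLen μ i) + b.2 + 1

/-- `a` occurs before `b` in the reading word (rows left to right, bottom to top). -/
def ReadBefore (a b : Box) : Prop := b.1 < a.1 ∨ (a.1 = b.1 ∧ a.2 < b.2)

/-- Length of the longest strictly increasing subsequence of the reading word. -/
noncomputable def LIS (dom : Finset Box) (f : Box → ℕ) : ℕ :=
  (dom.powerset.filter
    (fun I => ∀ a ∈ I, ∀ b ∈ I, ReadBefore a b → f a < f b)).sup Finset.card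

/-- One step of K-infusion: slide the boxes carrying the largest label `m` of the
inner tableau through the outer tableau, recording `m` at the vacated holes. -/
noncomputable def infusionStep
    (st : (Finset Box × (Box → ℕ)) × (Finset Box × (Box → ℕ)) × (Finset Box × (Box → ℕ))) :
    (Finset Box × (Box → ℕ)) × (Finset Box × (Box → ℕ)) × (Finset Box × (Box → ℕ)) :=
  let m := maxEntry st.1.1 st.1.2
  let xs := st.1.1.filter (fun b => st.1.2 b = m)
  let ks := KState xs st.2.1.1 st.2.1.2 (maxEntry st.2.1.1 st.2.1.2)
  ( (st.1.1 \ xs, st.1.2),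
    (ks.2.1, ks.2.2),
    (st.2.2.1 ∪ ks.1, fun b => if b ∈ ks.1 then m else st.2.2.2 b) )

/-- K-infusion of the pair `(T, U)`, where `U`'s shape extends `T`'s shape:
returns `(K-infusion₁(T,U), K-infusion₂(T,U))`. -/
noncomputable def KInfusion (Tdom : Finset Box) (Tf : Box → ℕ)
    (Udom : Finset Box) (Uf : Box → ℕ) :
    (Finset Box × (Box → ℕ)) × (Finset Box × (Box → ℕ)) :=
  ((infusionStep^[maxEntry Tdom Tf] ((Tdom, Tf), (Udom, Uf), (∅, fun _ => 0))).2.1,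
   (infusionStep^[maxEntry Tdom Tf] ((Tdom, Tf), (Udom, Uf), (∅, fun _ => 0))).2.2)

/-- `Δ(T)`: erase the entry `1` at the northwest corner, subtract one from the
remaining entries, and slide into the vacated corner. -/
noncomputable def Delta (p : Finset Box × (Box → ℕ)) : Finset Box × (Box → ℕ) :=
  KJdt {((0 : ℕ), (0 : ℕ))} (p.1.erase (0, 0)) (fun b => p.2 b - 1)

/-- K-evacuation: box `b` receives label `i` when `b` belongs to the shape of
`Δ^{i-1}(T)` but not to the shape of `Δ^{i}(T)`. -/
noncomputable def Kevac (p : Finset Box × (Box → ℕ)) : Box → ℕ :=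
  fun b => sInf {i : ℕ | b ∉ (Delta^[i] p).1}

/-- A horizontal strip: no two boxes in the same column. -/
def HorizontalStrip (dom : Finset Box) : Prop :=
  ∀ a ∈ dom, ∀ b ∈ dom, a ≠ b → a.2 ≠ b.2

def LeftmostIn (dom : Finset Box) (r c : ℕ) : Prop :=
  (r, c) ∈ dom ∧ ∀ c' < c, (r, c') ∉ dom

def RightmostIn (dom : Finset Box) (r c : ℕ) : Prop :=
  (r, c) ∈ dom ∧ ∀ c' > c, (r, c') ∉ dom

/-- A `t`-Pieri filling of a horizontal strip: entries of each row consecutive,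
the bottom row starts with `1`, each other row starts with the last entry of the
next nonempty row below it, or with that entry plus one; entries are `1,…,t`. -/
def IsPieri (dom : Finset Box) (f : Box → ℕ) (t : ℕ) : Prop :=
  HorizontalStrip dom ∧
  (∀ r c : ℕ, (r, c) ∈ dom → (r, c + 1) ∈ dom → f (r, c + 1) = f (r, c) + 1) ∧
  (∀ r c : ℕ, LeftmostIn dom r c → (∀ b ∈ dom, b.1 ≤ r) → f (r, c) = 1) ∧
  (∀ r c r' c' : ℕ, LeftmostIn dom r c → RightmostIn dom r' c' → r < r' →
    (∀ b ∈ dom, ¬ (r < b.1 ∧ b.1 < r')) →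
    (f (r, c) = f (r', c') ∨ f (r, c) = f (r', c') + 1)) ∧
  (∀ b ∈ dom, 1 ≤ f b ∧ f b ≤ t) ∧ (dom.Nonempty → ∃ b ∈ dom, f b = t)

/-- The domain of the one-row shape `(t)`. -/
def rowDom (t : ℕ) : Finset Box := (Finset.range t).image (fun c => ((0 : ℕ), c))

/-- The entries of the superstandard one-row tableau `S_(t)`. -/
def rowEnt : Box → ℕ := fun b => b.2 + 1

def numRows (dom : Finset Box) : ℕ := (dom.image Prod.fst).card

/-- The number of increasing tableaux of shape `ν/λ` whose K-rectification (for
some, equivalently by Theorem 1 any, rectification order) is the superstandard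
tableau `S_μ`.  Tableaux are normalized to vanish off their domain. -/
noncomputable def KrectCount (lam nu mu : Finset Box) : ℕ :=
  Set.ncard {f : Box → ℕ | (∀ b, b ∉ nu \ lam → f b = 0) ∧ IsIncTab (nu \ lam) f ∧
    ∃ g, Relation.ReflTransGen RectStep (lam, nu \ lam, f) (∅, mu, g) ∧
      ∀ b ∈ mu, g b = sstd mu b}

/-- Apply a (forward or reverse) K-jdt slide, as specified by `mv`. -/
noncomputable def applyMove (st : Finset Box × Finset Box × (Box → ℕ))
    (mv : Bool × Finset Box) : Finset Box × Finset Box × (Box → ℕ) :=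
  if mv.1 then doSlide st mv.2 else doRevSlide st mv.2

def ValidMove (st : Finset Box × Finset Box × (Box → ℕ)) (mv : Bool × Finset Box) : Prop :=
  mv.2.Nonempty ∧ (mv.1 = true → ∀ x ∈ mv.2, InnerCorner st.1 x) ∧
    (mv.1 = false → ∀ x ∈ mv.2, OuterCorner (st.1 ∪ st.2.1) x)

noncomputable def applySeq (L : List (Bool × Finset Box))
    (st : Finset Box × Finset Box × (Box → ℕ)) : Finset Box × Finset Box × (Box → ℕ) :=
  L.foldl applyMove st

def ValidSeq : List (Bool × Finset Box) → (Finset Box × Finset Box × (Box → ℕ)) → Prop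
  | [], _ => True
  | mv :: L, st => ValidMove st mv ∧ ValidSeq L (applyMove st mv)

/-- K-dual equivalence: every common sequence of (forward or reverse) slides
produces tableaux of the same shape. -/
def KDualEquiv (lam dom : Finset Box) (f g : Box → ℕ) : Prop :=
  ∀ L : List (Bool × Finset Box),
    ValidSeq L (lam, dom, f) → ValidSeq L (lam, dom, g) →
    (applySeq L (lam, dom, f)).2.1 = (applySeq L (lam, dom, g)).2.1

/-!
Processing the values `1, 2, …` one at a time, the K-jdt slide into the inner corners `xs`
keeps an invariant after the value `i`: the •'s fill exactly `α_i / γ_i`, where `α_i` is the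
shape of the entries `≤ i` before the slide and `γ_i` is `λ \ xs` together with the entries `≤ i`
after it, and the entries `> i` have not moved yet. Processing `i + 1` switches the •'s of
`α_i / γ_i` with the `(i+1)`'s of `α_{i+1} / α_i`, which is exactly the slide of the all-ones
filling of `α_{i+1} / α_i` into `α_i / γ_i`, so `γ_{i+1}` arises from `γ_i, α_i, α_{i+1}` by the
local rule.

For the local rule, let `γ ⊆ α ⊆ β` be Young diagrams such that neither `α / γ` nor `β / α` has
two boxes in a row or column. Two boxes of `β / γ` in a common row or column then lie in different
strips and are adjacent, so both are switched; this keeps the new shape `δ` a Young diagram and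
both new strips free of two boxes in a line. A box `x` of `β / γ` lies in `δ` iff
(`x ∈ α` ↔ `x` has a neighbour in `β / γ`), and the neighbour condition only depends on `β / γ`,
so `α` is recovered from `γ, δ, β`.
-/

theorem adjB.irrefl (a : Box) : ¬ adjB a a := by
  rintro (⟨_, h | h⟩ | ⟨_, h | h⟩) <;> omega

theorem adjB.symm {a b : Box} (h : adjB a b) : adjB b a := by
  rcases h with ⟨h1, h2⟩ | ⟨h1, h2⟩
  · exact Or.inl ⟨h1.symm, h2.symm⟩
  · exact Or.inr ⟨h1.symm, h2.symm⟩

theorem adjB.sameLine {a b : Box} (h : adjB a b) : a.1 = b.1 ∨ a.2 = b.2 := by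
  rcases h with ⟨h, -⟩ | ⟨h, -⟩ <;> simp [h]

theorem le_total_of_sameLine {a b : Box} (h : a.1 = b.1 ∨ a.2 = b.2) : a ≤ b ∨ b ≤ a := by
  simp only [Prod.le_def]
  omega

theorem exists_adjB_between {d v : Box} (h : d < v) :
    ∃ w, d ≤ w ∧ w < v ∧ adjB w v ∧ ((d.1 = v.1 ∨ d.2 = v.2) → d.1 = w.1 ∨ d.2 = w.2) := by
  obtain ⟨dr, dc⟩ := d
  obtain ⟨vr, vc⟩ := v
  simp only [Prod.mk_lt_mk] at h
  by_cases hc : dc < vc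
  · refine ⟨(vr, vc - 1), ?_, ?_, Or.inl ⟨rfl, Or.inl (by omega)⟩, fun _ => ?_⟩
    · exact Prod.mk_le_mk.2 ⟨by omega, by omega⟩
    · exact Prod.mk_lt_mk.2 (Or.inr ⟨le_rfl, by omega⟩)
    · simp only
      omega
  · refine ⟨(vr - 1, vc), ?_, ?_, Or.inr ⟨rfl, Or.inl (by omega)⟩, fun _ => ?_⟩
    · exact Prod.mk_le_mk.2 ⟨by omega, by omega⟩
    · exact Prod.mk_lt_mk.2 (Or.inl ⟨by omega, le_rfl⟩)
    · simp only
      omega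

theorem noTwoSameRowCol_iff {A : Finset Box} :
    NoTwoSameRowCol A ↔ ∀ a ∈ A, ∀ b ∈ A, (a.1 = b.1 ∨ a.2 = b.2) → a = b := by
  refine forall₄_congr fun a _ b _ => ?_
  tauto

theorem NoTwoSameRowCol.eq {A : Finset Box} (hA : NoTwoSameRowCol A) {a b : Box}
    (ha : a ∈ A) (hb : b ∈ A) (hline : a.1 = b.1 ∨ a.2 = b.2) : a = b :=
  noTwoSameRowCol_iff.1 hA a ha b hb hline

theorem NoTwoSameRowCol.mono {A B : Finset Box} (hB : NoTwoSameRowCol B) (h : A ⊆ B) :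
    NoTwoSameRowCol A :=
  fun a ha b hb => hB a (h ha) b (h hb)

def HasNeighborIn (S : Finset Box) (b : Box) : Prop := b ∈ S ∧ ∃ c ∈ S, adjB b c

theorem hasNeighborIn_of_adjB {S : Finset Box} {a b : Box} (ha : a ∈ S) (hb : b ∈ S)
    (h : adjB a b) : HasNeighborIn S a :=
  ⟨ha, b, hb, h⟩

theorem exists_conn_iff_hasNeighborIn (S : Finset Box) (b : Box) :
    (∃ b' ∈ S, b' ≠ b ∧ conn S b b') ↔ HasNeighborIn S b := by
  constructor
  · rintro ⟨b', -, hne, hconn⟩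
    rcases hconn.cases_head with rfl | ⟨c, ⟨hb, hc, h⟩, -⟩
    · exact absurd rfl hne
    · exact ⟨hb, c, hc, h⟩
  · rintro ⟨hb, c, hc, h⟩
    exact ⟨c, hc, fun hcb => adjB.irrefl b (hcb ▸ h), .single ⟨hb, hc, h⟩⟩

theorem NoTwoSameRowCol.not_hasNeighborIn {A : Finset Box} (hA : NoTwoSameRowCol A)
    (b : Box) : ¬ HasNeighborIn A b := fun ⟨hb, _, hc, h⟩ =>
  adjB.irrefl b (hA.eq hb hc h.sameLine ▸ h)

theorem IsYoung.isLowerSet {μ : Finset Box} (hμ : IsYoung μ) : IsLowerSet (μ : Set Box) := by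
  have hrow : ∀ r c k, (r, c + k) ∈ μ → (r, c) ∈ μ := by
    intro r c k
    induction k with
    | zero => exact id
    | succ k ih => exact fun h => ih (hμ.2 _ _ h)
  have hcol : ∀ r c k, (r + k, c) ∈ μ → (r, c) ∈ μ := by
    intro r c k
    induction k with
    | zero => exact id
    | succ k ih => exact fun h => ih (hμ.1 _ _ h)
  rintro ⟨r, c⟩ ⟨r', c'⟩ ⟨hr : r' ≤ r, hc : c' ≤ c⟩ (h : (r, c) ∈ μ)
  obtain ⟨k, rfl⟩ := Nat.exists_eq_add_of_le hc
  obtain ⟨l, rfl⟩ := Nat.exists_eq_add_of_le hr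
  exact hcol _ _ l (hrow _ _ k h)

theorem isYoung_of_adjB {μ : Finset Box} (h : ∀ a b, adjB a b → a ≤ b → b ∈ μ → a ∈ μ) :
    IsYoung μ :=
  ⟨fun r c => h _ _ (by unfold adjB; omega) (by simp),
    fun r c => h _ _ (by unfold adjB; omega) (by simp)⟩

theorem isYoung_sdiff_innerCorners {lam xs : Finset Box} (hlam : IsYoung lam)
    (hxs : ∀ x ∈ xs, InnerCorner lam x) : IsYoung (lam \ xs) :=
  ⟨fun r c h => mem_sdiff.2 ⟨hlam.1 r c (mem_sdiff.1 h).1,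
      fun hx => (hxs _ hx).2.1 (mem_sdiff.1 h).1⟩,
    fun r c h => mem_sdiff.2 ⟨hlam.2 r c (mem_sdiff.1 h).1,
      fun hx => (hxs _ hx).2.2 (mem_sdiff.1 h).1⟩⟩

theorem noTwoSameRowCol_innerCorners {lam xs : Finset Box} (hlam : IsYoung lam)
    (hxs : ∀ x ∈ xs, InnerCorner lam x) : NoTwoSameRowCol xs := by
  refine noTwoSameRowCol_iff.2 fun a ha b hb hline => ?_
  obtain ⟨haL, haR, haD⟩ := hxs a ha
  obtain ⟨hbL, hbR, hbD⟩ := hxs b hb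
  obtain ⟨ar, ac⟩ := a
  obtain ⟨br, bc⟩ := b
  simp only at hline haR haD hbR hbD
  have low := hlam.isLowerSet
  rcases hline with rfl | rfl
  · rcases lt_trichotomy ac bc with h | rfl | h
    · exact (haD (low (Prod.mk_le_mk.2 ⟨le_rfl, h⟩) hbL)).elim
    · rfl
    · exact (hbD (low (Prod.mk_le_mk.2 ⟨le_rfl, h⟩) haL)).elim
  · rcases lt_trichotomy ar br with h | rfl | h
    · exact (haR (low (Prod.mk_le_mk.2 ⟨h, le_rfl⟩) hbL)).elim
    · rfl
    · exact (hbR (low (Prod.mk_le_mk.2 ⟨h, le_rfl⟩) haL)).elim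

section SkewTableau

variable {lam nu : Finset Box} {f : Box → ℕ}

theorem IncreasingOn.lt_of_adjB {dom : Finset Box} (hI : IncreasingOn dom f)
    {a b : Box} (ha : a ∈ dom) (hb : b ∈ dom) (hadj : adjB a b) (hab : a ≤ b) : f a < f b := by
  obtain ⟨ar, ac⟩ := a
  obtain ⟨br, bc⟩ := b
  obtain ⟨hr, hc⟩ := Prod.mk_le_mk.1 hab
  rcases hadj with ⟨rfl, h | h⟩ | ⟨rfl, h | h⟩
  · subst h; exact hI.1 _ _ ha hb
  · omega
  · subst h; exact hI.2 _ _ ha hb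
  · omega

theorem IncreasingOn.strictMonoOn (hlam : IsYoung lam) (hnu : IsYoung nu)
    (hI : IncreasingOn (nu \ lam) f) : StrictMonoOn f ↑(nu \ lam) := by
  intro a ha b hb hab
  induction b using WellFoundedLT.induction with
  | _ b ih =>
  obtain ⟨w, haw, hwb, hadj, -⟩ := exists_adjB_between hab
  have hw : w ∈ nu \ lam := mem_sdiff.2 ⟨hnu.isLowerSet hwb.le (mem_sdiff.1 hb).1,
    fun h => (mem_sdiff.1 ha).2 (hlam.isLowerSet haw h)⟩
  have hfw := hI.lt_of_adjB hw hb hadj hwb.le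
  rcases haw.eq_or_lt with rfl | h
  · exact hfw
  · exact (ih w hwb hw h).trans hfw

theorem noTwoSameRowCol_filter_eq (hlam : IsYoung lam) (hnu : IsYoung nu)
    (hI : IncreasingOn (nu \ lam) f) (v : ℕ) :
    NoTwoSameRowCol ((nu \ lam).filter (fun b => f b = v)) := by
  refine noTwoSameRowCol_iff.2 fun a ha b hb hline => ?_
  simp only [mem_filter] at ha hb
  have hmono := hI.strictMonoOn hlam hnu
  rcases le_total_of_sameLine hline with h | h
  · exact h.eq_of_not_lt fun h => (hmono ha.1 hb.1 h).ne (ha.2.trans hb.2.symm)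
  · exact (h.eq_of_not_lt fun h => (hmono hb.1 ha.1 h).ne (hb.2.trans ha.2.symm)).symm

end SkewTableau

section SwitchStep

def level (st : Finset Box × Finset Box × (Box → ℕ)) (v : ℕ) : Finset Box :=
  st.2.1.filter (fun b => st.2.2 b = v)

theorem mem_level {st : Finset Box × Finset Box × (Box → ℕ)} {v : ℕ} {b : Box} :
    b ∈ level st v ↔ b ∈ st.2.1 ∧ st.2.2 b = v :=
  mem_filter

variable (st : Finset Box × Finset Box × (Box → ℕ)) (i : ℕ)

theorem switchStep_eq : switchStep st i =
    (st.2.1.filter (fun b => st.2.2 b = i ∧ HasNeighborIn (st.1 ∪ level st i) b) ∪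
        st.1.filter (fun b => ¬ HasNeighborIn (st.1 ∪ level st i) b),
      st.2.1.filter (fun b => ¬ (st.2.2 b = i ∧ HasNeighborIn (st.1 ∪ level st i) b)) ∪
        st.1.filter (HasNeighborIn (st.1 ∪ level st i)),
      fun b => if b ∈ st.1 ∧ HasNeighborIn (st.1 ∪ level st i) b then i else st.2.2 b) := by
  simp only [switchStep, exists_conn_iff_hasNeighborIn]
  rfl

theorem switchStep_fst : (switchStep st i).1 =
    (level st i).filter (HasNeighborIn (st.1 ∪ level st i)) ∪
      st.1.filter (fun b => ¬ HasNeighborIn (st.1 ∪ level st i) b) := by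
  rw [switchStep_eq, level, filter_filter]

variable {st i}

theorem filter_switchStep (hdisj : Disjoint st.1 st.2.1) {p : ℕ → Prop} [DecidablePred p]
    (hp : ¬ p i) :
    (switchStep st i).2.1.filter (fun b => p ((switchStep st i).2.2 b)) =
      st.2.1.filter (fun b => p (st.2.2 b)) := by
  ext b
  rw [switchStep_eq]
  simp only [mem_filter, mem_union]
  split_ifs with h
  · simp only [hp, and_false, false_iff, not_and]
    exact fun hb => disjoint_left.1 hdisj h.1 hb |>.elim
  · constructor
    · rintro ⟨hb | hb, hpb⟩
      · exact ⟨hb.1, hpb⟩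
      · exact absurd hb h
    · rintro ⟨hb, hpb⟩
      exact ⟨Or.inl ⟨hb, fun hi => hp (hi.1 ▸ hpb)⟩, hpb⟩

theorem level_switchStep_of_ne (hdisj : Disjoint st.1 st.2.1) {v : ℕ} (hv : v ≠ i) :
    level (switchStep st i) v = level st v :=
  filter_switchStep hdisj (p := (· = v)) (Ne.symm hv)

theorem KJdt_ones {A B : Finset Box} (hA : NoTwoSameRowCol A) :
    (KJdt A B (fun _ => 1)).1 =
      B.filter (fun b => ¬ HasNeighborIn (A ∪ B) b) ∪ A.filter (HasNeighborIn (A ∪ B)) := by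
  rcases B.eq_empty_or_nonempty with rfl | hB
  · simp only [filter_empty, union_empty, filter_false_of_mem
      fun b _ => hA.not_hasNeighborIn b]
    rfl
  · have hmax : maxEntry B (fun _ => 1) = 1 := sup_const hB 1
    have hlevel : level (A, B, fun _ => 1) 1 = B := filter_true_of_mem fun _ _ => rfl
    rw [KJdt, hmax, KState, List.range_one, List.foldl_cons, List.foldl_nil, switchStep_eq]
    simp only [hlevel, true_and]

theorem level_switchStep_self (hdots : NoTwoSameRowCol st.1) :
    level (switchStep st i) i = (KJdt st.1 (level st i) (fun _ => 1)).1 := by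
  rw [KJdt_ones hdots]
  ext b
  rw [mem_level, switchStep_eq]
  simp only [mem_union, mem_filter, mem_level]
  split_ifs with h <;> tauto

theorem switchStep_eq_self (hdots : NoTwoSameRowCol st.1) (hlevel : level st i = ∅) :
    switchStep st i = st := by
  have hsw : ∀ b, ¬ HasNeighborIn (st.1 ∪ level st i) b := by
    rw [hlevel, union_empty]
    exact hdots.not_hasNeighborIn
  rw [switchStep_eq]
  simp only [hsw, and_false, not_false_eq_true, filter_true, filter_false, union_empty,
    empty_union, if_false]

theorem KState_succ (xs dom : Finset Box) (f : Box → ℕ) (m : ℕ) :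
    KState xs dom f (m + 1) = switchStep (KState xs dom f m) (m + 1) := by
  rw [KState, List.range_succ, List.foldl_append, List.foldl_cons, List.foldl_nil]
  rfl

end SwitchStep

section LocalRule

variable {δ α β : Finset Box}

theorem KJdt_ones_sdiff (hδα : δ ⊆ α) (hαβ : α ⊆ β) (hD : NoTwoSameRowCol (α \ δ)) :
    (KJdt (α \ δ) (β \ α) (fun _ => 1)).1 =
      (β \ α).filter (fun b => ¬ HasNeighborIn (β \ δ) b) ∪
        (α \ δ).filter (HasNeighborIn (β \ δ)) := by
  rw [KJdt_ones hD, union_comm (α \ δ), sdiff_union_sdiff_cancel hαβ hδα]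

theorem mem_KJdt_ones_sdiff (hδα : δ ⊆ α) (hαβ : α ⊆ β) (hD : NoTwoSameRowCol (α \ δ))
    {x : Box} :
    x ∈ (KJdt (α \ δ) (β \ α) (fun _ => 1)).1 ↔
      x ∈ β \ δ ∧ (x ∈ α ↔ HasNeighborIn (β \ δ) x) := by
  rw [KJdt_ones_sdiff hδα hαβ hD]
  simp only [mem_union, mem_filter, mem_sdiff]
  have := @hαβ x
  have := @hδα x
  tauto

theorem mem_sdiff_union_KJdt_ones (hδα : δ ⊆ α) (hαβ : α ⊆ β) (hD : NoTwoSameRowCol (α \ δ))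
    {x : Box} :
    x ∈ β \ (δ ∪ (KJdt (α \ δ) (β \ α) (fun _ => 1)).1) ↔
      x ∈ β \ δ ∧ (x ∈ α ↔ ¬ HasNeighborIn (β \ δ) x) := by
  simp only [mem_sdiff, mem_union, mem_KJdt_ones_sdiff hδα hαβ hD]
  tauto

theorem adjB_of_mem_sdiff_of_sameLine (hδ : IsYoung δ) (hα : IsYoung α) (hβ : IsYoung β)
    (hD : NoTwoSameRowCol (α \ δ)) (hV : NoTwoSameRowCol (β \ α)) {d v : Box}
    (hd : d ∈ α \ δ) (hv : v ∈ β \ α) (hline : d.1 = v.1 ∨ d.2 = v.2) : adjB d v := by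
  rw [mem_sdiff] at hd hv
  have hdv : d < v := by
    rcases le_total_of_sameLine hline with h | h
    · exact h.lt_of_ne fun hdv => hv.2 (hdv ▸ hd.1)
    · exact absurd (hα.isLowerSet h hd.1) hv.2
  obtain ⟨w, hdw, hwv, hadj, hdw'⟩ := exists_adjB_between hdv
  have hwβ : w ∈ β := hβ.isLowerSet hwv.le hv.1
  have hwδ : w ∉ δ := fun h => hd.2 (hδ.isLowerSet hdw h)
  by_cases hwα : w ∈ α
  · rwa [hD.eq (mem_sdiff.2 hd) (mem_sdiff.2 ⟨hwα, hwδ⟩) (hdw' hline)]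
  · have := hV.eq (mem_sdiff.2 ⟨hwβ, hwα⟩) (mem_sdiff.2 hv) hadj.sameLine
    exact absurd (this ▸ hadj) (adjB.irrefl v)

theorem adjB_of_sameLine (hδ : IsYoung δ) (hα : IsYoung α) (hβ : IsYoung β)
    (hD : NoTwoSameRowCol (α \ δ)) (hV : NoTwoSameRowCol (β \ α)) {x y : Box}
    (hx : x ∈ β \ δ) (hy : y ∈ β \ δ) (hxy : x ≠ y) (hline : x.1 = y.1 ∨ x.2 = y.2) :
    adjB x y := by
  rw [mem_sdiff] at hx hy
  by_cases hxα : x ∈ α <;> by_cases hyα : y ∈ α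
  · exact absurd (hD.eq (mem_sdiff.2 ⟨hxα, hx.2⟩) (mem_sdiff.2 ⟨hyα, hy.2⟩) hline) hxy
  · exact adjB_of_mem_sdiff_of_sameLine hδ hα hβ hD hV (mem_sdiff.2 ⟨hxα, hx.2⟩)
      (mem_sdiff.2 ⟨hy.1, hyα⟩) hline
  · exact (adjB_of_mem_sdiff_of_sameLine hδ hα hβ hD hV (mem_sdiff.2 ⟨hyα, hy.2⟩)
      (mem_sdiff.2 ⟨hx.1, hxα⟩) (hline.imp Eq.symm Eq.symm)).symm
  · exact absurd (hV.eq (mem_sdiff.2 ⟨hx.1, hxα⟩) (mem_sdiff.2 ⟨hy.1, hyα⟩) hline) hxy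

theorem isYoung_union_KJdt_ones (hδ : IsYoung δ) (hα : IsYoung α) (hβ : IsYoung β)
    (hδα : δ ⊆ α) (hαβ : α ⊆ β) (hD : NoTwoSameRowCol (α \ δ)) :
    IsYoung (δ ∪ (KJdt (α \ δ) (β \ α) (fun _ => 1)).1) := by
  refine isYoung_of_adjB fun a b hadj hab hb => ?_
  rw [mem_union, mem_KJdt_ones_sdiff hδα hαβ hD] at hb ⊢
  by_cases haδ : a ∈ δ
  · exact Or.inl haδ
  have hbδ : b ∉ δ := fun h => haδ (hδ.isLowerSet hab h)
  have hbK : b ∈ β \ δ ∧ (b ∈ α ↔ HasNeighborIn (β \ δ) b) := hb.resolve_left hbδ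
  have ha : a ∈ β \ δ := mem_sdiff.2 ⟨hβ.isLowerSet hab (mem_sdiff.1 hbK.1).1, haδ⟩
  have hbα : b ∈ α := hbK.2.2 (hasNeighborIn_of_adjB hbK.1 ha hadj.symm)
  exact Or.inr ⟨ha, iff_of_true (hα.isLowerSet hab hbα) (hasNeighborIn_of_adjB ha hbK.1 hadj)⟩

theorem noTwoSameRowCol_KJdt_ones (hδ : IsYoung δ) (hα : IsYoung α) (hβ : IsYoung β)
    (hδα : δ ⊆ α) (hαβ : α ⊆ β) (hD : NoTwoSameRowCol (α \ δ))
    (hV : NoTwoSameRowCol (β \ α)) :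
    NoTwoSameRowCol (KJdt (α \ δ) (β \ α) (fun _ => 1)).1 := by
  refine noTwoSameRowCol_iff.2 fun x hx y hy hline => ?_
  rw [mem_KJdt_ones_sdiff hδα hαβ hD] at hx hy
  by_contra hxy
  have hadj := adjB_of_sameLine hδ hα hβ hD hV hx.1 hy.1 hxy hline
  have hxα := hx.2.2 (hasNeighborIn_of_adjB hx.1 hy.1 hadj)
  have hyα := hy.2.2 (hasNeighborIn_of_adjB hy.1 hx.1 hadj.symm)
  exact hxy (hD.eq (mem_sdiff.2 ⟨hxα, (mem_sdiff.1 hx.1).2⟩)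
    (mem_sdiff.2 ⟨hyα, (mem_sdiff.1 hy.1).2⟩) hline)

theorem noTwoSameRowCol_sdiff_union_KJdt_ones (hδ : IsYoung δ) (hα : IsYoung α)
    (hβ : IsYoung β) (hδα : δ ⊆ α) (hαβ : α ⊆ β) (hD : NoTwoSameRowCol (α \ δ))
    (hV : NoTwoSameRowCol (β \ α)) :
    NoTwoSameRowCol (β \ (δ ∪ (KJdt (α \ δ) (β \ α) (fun _ => 1)).1)) := by
  refine noTwoSameRowCol_iff.2 fun x hx y hy hline => ?_
  rw [mem_sdiff_union_KJdt_ones hδα hαβ hD] at hx hy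
  by_contra hxy
  have hadj := adjB_of_sameLine hδ hα hβ hD hV hx.1 hy.1 hxy hline
  have hxα := mt hx.2.1 (not_not.2 (hasNeighborIn_of_adjB hx.1 hy.1 hadj))
  have hyα := mt hy.2.1 (not_not.2 (hasNeighborIn_of_adjB hy.1 hx.1 hadj.symm))
  exact hxy (hV.eq (mem_sdiff.2 ⟨(mem_sdiff.1 hx.1).1, hxα⟩)
    (mem_sdiff.2 ⟨(mem_sdiff.1 hy.1).1, hyα⟩) hline)

theorem eq_of_union_KJdt_ones_eq {α' : Finset Box} (hδα : δ ⊆ α) (hαβ : α ⊆ β)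
    (hD : NoTwoSameRowCol (α \ δ)) (hδα' : δ ⊆ α') (hα'β : α' ⊆ β)
    (hD' : NoTwoSameRowCol (α' \ δ))
    (h : δ ∪ (KJdt (α \ δ) (β \ α) (fun _ => 1)).1 =
      δ ∪ (KJdt (α' \ δ) (β \ α') (fun _ => 1)).1) :
    α = α' := by
  ext x
  by_cases hx : x ∈ β \ δ
  · have hmem := congrArg (x ∈ ·) h
    simp only [mem_union, mem_KJdt_ones_sdiff hδα hαβ hD, mem_KJdt_ones_sdiff hδα' hα'β hD',
      (mem_sdiff.1 hx).2, hx, true_and, false_or, eq_iff_iff] at hmem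
    tauto
  · rw [mem_sdiff, not_and_not_right] at hx
    have := @hαβ x
    have := @hα'β x
    have := @hδα x
    have := @hδα' x
    tauto

end LocalRule

section Slide

variable (lam nu xs : Finset Box) (f : Box → ℕ)

def tabShape (i : ℕ) : Finset Box := lam ∪ (nu \ lam).filter (fun b => f b ≤ i)

-- `tabShape … i` and `slideShape … i` are the shapes `α_i` and `γ_i` above; by `doSlide_shape_eq`,
-- `γ_i` is also `λ \ xs` together with the entries `≤ i` of the completed slide.
noncomputable def slideShape (i : ℕ) : Finset Box :=
  (lam \ xs) ∪
    (KState xs (nu \ lam) f i).2.1.filter (fun b => (KState xs (nu \ lam) f i).2.2 b ≤ i)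

structure SlideInvariant (i : ℕ) : Prop where
  isYoung : IsYoung (slideShape lam nu xs f i)
  subset : slideShape lam nu xs f i ⊆ tabShape lam nu f i
  noTwo : NoTwoSameRowCol (tabShape lam nu f i \ slideShape lam nu xs f i)
  dots_eq : (KState xs (nu \ lam) f i).1 = tabShape lam nu f i \ slideShape lam nu xs f i
  level_eq : ∀ v, i < v →
    level (KState xs (nu \ lam) f i) v = (nu \ lam).filter (fun b => f b = v)

theorem tabShape_subset_succ (i : ℕ) : tabShape lam nu f i ⊆ tabShape lam nu f (i + 1) :=
  union_subset_union_right (monotone_filter_right _ fun _ _ h => Nat.le_succ_of_le h)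

variable {lam nu xs f}

theorem tabShape_succ_sdiff (i : ℕ) :
    tabShape lam nu f (i + 1) \ tabShape lam nu f i = (nu \ lam).filter (fun b => f b = i + 1) := by
  ext b
  simp only [tabShape, mem_sdiff, mem_union, mem_filter]
  have : f b ≤ i + 1 ∧ ¬ f b ≤ i ↔ f b = i + 1 := by omega
  tauto

theorem noTwoSameRowCol_tabShape_succ_sdiff (hlam : IsYoung lam) (hnu : IsYoung nu)
    (hI : IncreasingOn (nu \ lam) f) (i : ℕ) :
    NoTwoSameRowCol (tabShape lam nu f (i + 1) \ tabShape lam nu f i) := by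
  rw [tabShape_succ_sdiff]
  exact noTwoSameRowCol_filter_eq hlam hnu hI (i + 1)

theorem isYoung_tabShape (hlam : IsYoung lam) (hnu : IsYoung nu)
    (hI : IncreasingOn (nu \ lam) f) (i : ℕ) : IsYoung (tabShape lam nu f i) := by
  refine isYoung_of_adjB fun a b hadj hab hb => ?_
  simp only [tabShape, mem_union, mem_filter] at hb ⊢
  by_cases ha : a ∈ lam
  · exact Or.inl ha
  obtain ⟨hb, hfb⟩ := hb.resolve_left fun h => ha (hlam.isLowerSet hab h)
  have ha' : a ∈ nu \ lam := mem_sdiff.2 ⟨hnu.isLowerSet hab (mem_sdiff.1 hb).1, ha⟩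
  have hlt : a < b := lt_of_le_of_ne hab fun h => adjB.irrefl a (h ▸ hadj)
  exact Or.inr ⟨ha', (hI.strictMonoOn hlam hnu ha' hb hlt).le.trans hfb⟩

theorem SlideInvariant.disjoint {i : ℕ} (h : SlideInvariant lam nu xs f i) :
    Disjoint (KState xs (nu \ lam) f i).1 (KState xs (nu \ lam) f i).2.1 := by
  set st := KState xs (nu \ lam) f i
  rw [disjoint_left, h.dots_eq]
  intro b hb hdom
  obtain ⟨hbα, hbγ⟩ := mem_sdiff.1 hb
  by_cases hle : st.2.2 b ≤ i
  · exact hbγ (mem_union_right _ (mem_filter.2 ⟨hdom, hle⟩))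
  · have hb' : b ∈ (nu \ lam).filter (fun c => f c = st.2.2 b) :=
      h.level_eq _ (not_le.1 hle) ▸ mem_level.2 ⟨hdom, rfl⟩
    rw [mem_filter] at hb'
    rcases mem_union.1 hbα with hl | hf
    · exact (mem_sdiff.1 hb'.1).2 hl
    · exact hle (hb'.2 ▸ (mem_filter.1 hf).2)

theorem SlideInvariant.level_succ {i : ℕ} (h : SlideInvariant lam nu xs f i) :
    level (KState xs (nu \ lam) f i) (i + 1) = tabShape lam nu f (i + 1) \ tabShape lam nu f i := by
  rw [h.level_eq _ (Nat.lt_succ_self i), tabShape_succ_sdiff]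

theorem SlideInvariant.slideShape_succ {i : ℕ} (h : SlideInvariant lam nu xs f i) :
    slideShape lam nu xs f (i + 1) = slideShape lam nu xs f i ∪
      (KJdt (tabShape lam nu f i \ slideShape lam nu xs f i)
        (tabShape lam nu f (i + 1) \ tabShape lam nu f i) (fun _ => 1)).1 := by
  set st := KState xs (nu \ lam) f i
  have hsplit : ∀ st' : Finset Box × Finset Box × (Box → ℕ),
      st'.2.1.filter (fun b => st'.2.2 b ≤ i + 1) =
        st'.2.1.filter (fun b => st'.2.2 b ≤ i) ∪ level st' (i + 1) := by
    intro st'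
    ext b
    simp only [mem_union, mem_filter, mem_level, Nat.le_add_one_iff, and_or_left]
  have hlow : (switchStep st (i + 1)).2.1.filter (fun b => (switchStep st (i + 1)).2.2 b ≤ i) =
      st.2.1.filter (fun b => st.2.2 b ≤ i) :=
    filter_switchStep h.disjoint (p := (· ≤ i)) (by omega)
  rw [slideShape, KState_succ, hsplit, hlow,
    level_switchStep_self (h.dots_eq ▸ h.noTwo), h.level_succ, h.dots_eq, slideShape, union_assoc]

theorem SlideInvariant.dots_succ {i : ℕ} (h : SlideInvariant lam nu xs f i) :
    (KState xs (nu \ lam) f (i + 1)).1 =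
      tabShape lam nu f (i + 1) \ slideShape lam nu xs f (i + 1) := by
  have hγα := h.subset
  have hαβ := tabShape_subset_succ lam nu f i
  ext x
  rw [KState_succ, switchStep_fst, h.level_succ, h.dots_eq,
    union_comm (tabShape lam nu f i \ slideShape lam nu xs f i),
    sdiff_union_sdiff_cancel hαβ hγα, h.slideShape_succ, mem_sdiff_union_KJdt_ones hγα hαβ h.noTwo]
  simp only [mem_union, mem_filter, mem_sdiff]
  have := @hγα x
  have := @hαβ x
  tauto

theorem SlideInvariant.succ (hlam : IsYoung lam) (hnu : IsYoung nu)
    (hI : IncreasingOn (nu \ lam) f) {i : ℕ} (h : SlideInvariant lam nu xs f i) :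
    SlideInvariant lam nu xs f (i + 1) := by
  have hα := isYoung_tabShape hlam hnu hI i
  have hβ := isYoung_tabShape hlam hnu hI (i + 1)
  have hαβ := tabShape_subset_succ lam nu f i
  refine ⟨?_, ?_, ?_, h.dots_succ, fun v hv => ?_⟩
  · rw [h.slideShape_succ]
    exact isYoung_union_KJdt_ones h.isYoung hα hβ h.subset hαβ h.noTwo
  · rw [h.slideShape_succ]
    refine union_subset (h.subset.trans hαβ) fun x hx => ?_
    exact (mem_sdiff.1 ((mem_KJdt_ones_sdiff h.subset hαβ h.noTwo).1 hx).1).1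
  · rw [h.slideShape_succ]
    exact noTwoSameRowCol_sdiff_union_KJdt_ones h.isYoung hα hβ h.subset hαβ h.noTwo
      (noTwoSameRowCol_tabShape_succ_sdiff hlam hnu hI i)
  · rw [KState_succ, level_switchStep_of_ne h.disjoint (by omega), h.level_eq v (by omega)]

theorem slideInvariant_zero (hlam : IsYoung lam) (hpos : ∀ b ∈ nu \ lam, 1 ≤ f b)
    (hxs : ∀ x ∈ xs, InnerCorner lam x) : SlideInvariant lam nu xs f 0 := by
  have hempty : (nu \ lam).filter (fun b => f b ≤ 0) = ∅ :=
    filter_false_of_mem fun b hb hf => by have := hpos b hb; omega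
  have hα : tabShape lam nu f 0 = lam := by rw [tabShape, hempty, union_empty]
  have hγ : slideShape lam nu xs f 0 = lam \ xs := by
    rw [slideShape, KState, List.range_zero, List.foldl_nil]
    exact (congrArg _ hempty).trans (union_empty _)
  have hdots : tabShape lam nu f 0 \ slideShape lam nu xs f 0 = xs := by
    rw [hα, hγ, sdiff_sdiff_eq_self fun x hx => (hxs x hx).1]
  refine ⟨hγ ▸ isYoung_sdiff_innerCorners hlam hxs, by rw [hα, hγ]; exact sdiff_subset,
    by rw [hdots]; exact noTwoSameRowCol_innerCorners hlam hxs, hdots.symm, fun _ _ => rfl⟩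

theorem slideInvariant (hlam : IsYoung lam) (hnu : IsYoung nu) (hT : IsIncTab (nu \ lam) f)
    (hxs : ∀ x ∈ xs, InnerCorner lam x) (i : ℕ) : SlideInvariant lam nu xs f i := by
  induction i with
  | zero => exact slideInvariant_zero hlam hT.2.1 hxs
  | succ i ih => exact ih.succ hlam hnu hT.1

theorem filter_KState_le (hinv : ∀ i, SlideInvariant lam nu xs f i) {j k : ℕ} (hjk : j ≤ k) :
    (KState xs (nu \ lam) f k).2.1.filter (fun b => (KState xs (nu \ lam) f k).2.2 b ≤ j) =
      (KState xs (nu \ lam) f j).2.1.filter (fun b => (KState xs (nu \ lam) f j).2.2 b ≤ j) := by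
  induction k, hjk using Nat.le_induction with
  | base => rfl
  | succ k hjk ih =>
    rw [KState_succ, filter_switchStep (hinv k).disjoint (p := (· ≤ j)) (by omega), ih]

theorem KState_eq_of_maxEntry_le (hinv : ∀ i, SlideInvariant lam nu xs f i) {k : ℕ}
    (hk : maxEntry (nu \ lam) f ≤ k) :
    KState xs (nu \ lam) f k = KState xs (nu \ lam) f (maxEntry (nu \ lam) f) := by
  induction k, hk using Nat.le_induction with
  | base => rfl
  | succ k hk ih =>
    have hlevel : level (KState xs (nu \ lam) f k) (k + 1) = ∅ := by
      rw [(hinv k).level_eq _ (Nat.lt_succ_self k)]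
      exact filter_false_of_mem fun b hb hfb => by
        have : f b ≤ maxEntry (nu \ lam) f := le_sup hb
        omega
    rw [KState_succ, switchStep_eq_self ((hinv k).dots_eq ▸ (hinv k).noTwo) hlevel, ih]

theorem doSlide_shape_eq (hinv : ∀ i, SlideInvariant lam nu xs f i) (j : ℕ) :
    (doSlide (lam, nu \ lam, f) xs).1 ∪ (doSlide (lam, nu \ lam, f) xs).2.1.filter
        (fun b => (doSlide (lam, nu \ lam, f) xs).2.2 b ≤ j) =
      slideShape lam nu xs f j := by
  have hM := KState_eq_of_maxEntry_le hinv (le_max_left (maxEntry (nu \ lam) f) j)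
  rw [slideShape, ← filter_KState_le hinv (le_max_right (maxEntry (nu \ lam) f) j), hM]
  rfl

end Slide

theorem stmt12_general (lam nu : Finset Box) (f : Box → ℕ) (xs : Finset Box) (j : ℕ)
    (hlam : IsYoung lam) (hnu : IsYoung nu)
    (hT : IsIncTab (nu \ lam) f)
    (hxsc : ∀ x ∈ xs, InnerCorner lam x) :
    (NoTwoSameRowCol ((lam ∪ (nu \ lam).filter (fun b => f b ≤ j)) \
        ((doSlide (lam, nu \ lam, f) xs).1 ∪
          (doSlide (lam, nu \ lam, f) xs).2.1.filter
            (fun b => (doSlide (lam, nu \ lam, f) xs).2.2 b ≤ j))) ∧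
      NoTwoSameRowCol ((lam ∪ (nu \ lam).filter (fun b => f b ≤ j + 1)) \
        (lam ∪ (nu \ lam).filter (fun b => f b ≤ j))) ∧
      NoTwoSameRowCol ((lam ∪ (nu \ lam).filter (fun b => f b ≤ j + 1)) \
        ((doSlide (lam, nu \ lam, f) xs).1 ∪
          (doSlide (lam, nu \ lam, f) xs).2.1.filter
            (fun b => (doSlide (lam, nu \ lam, f) xs).2.2 b ≤ j + 1))) ∧
      NoTwoSameRowCol (((doSlide (lam, nu \ lam, f) xs).1 ∪
          (doSlide (lam, nu \ lam, f) xs).2.1.filter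
            (fun b => (doSlide (lam, nu \ lam, f) xs).2.2 b ≤ j + 1)) \
        ((doSlide (lam, nu \ lam, f) xs).1 ∪
          (doSlide (lam, nu \ lam, f) xs).2.1.filter
            (fun b => (doSlide (lam, nu \ lam, f) xs).2.2 b ≤ j)))) ∧
    ((doSlide (lam, nu \ lam, f) xs).1 ∪
        (doSlide (lam, nu \ lam, f) xs).2.1.filter
          (fun b => (doSlide (lam, nu \ lam, f) xs).2.2 b ≤ j + 1))
      = ((doSlide (lam, nu \ lam, f) xs).1 ∪
          (doSlide (lam, nu \ lam, f) xs).2.1.filter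
            (fun b => (doSlide (lam, nu \ lam, f) xs).2.2 b ≤ j)) ∪
        (KJdt ((lam ∪ (nu \ lam).filter (fun b => f b ≤ j)) \
            ((doSlide (lam, nu \ lam, f) xs).1 ∪
              (doSlide (lam, nu \ lam, f) xs).2.1.filter
                (fun b => (doSlide (lam, nu \ lam, f) xs).2.2 b ≤ j)))
          ((lam ∪ (nu \ lam).filter (fun b => f b ≤ j + 1)) \
            (lam ∪ (nu \ lam).filter (fun b => f b ≤ j)))
          (fun _ => 1)).1 ∧
    (∀ α' : Finset Box,
      ((doSlide (lam, nu \ lam, f) xs).1 ∪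
        (doSlide (lam, nu \ lam, f) xs).2.1.filter
          (fun b => (doSlide (lam, nu \ lam, f) xs).2.2 b ≤ j)) ⊆ α' →
      α' ⊆ (lam ∪ (nu \ lam).filter (fun b => f b ≤ j + 1)) →
      NoTwoSameRowCol (α' \ ((doSlide (lam, nu \ lam, f) xs).1 ∪
        (doSlide (lam, nu \ lam, f) xs).2.1.filter
          (fun b => (doSlide (lam, nu \ lam, f) xs).2.2 b ≤ j))) →
      NoTwoSameRowCol ((lam ∪ (nu \ lam).filter (fun b => f b ≤ j + 1)) \ α') →
      ((doSlide (lam, nu \ lam, f) xs).1 ∪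
          (doSlide (lam, nu \ lam, f) xs).2.1.filter
            (fun b => (doSlide (lam, nu \ lam, f) xs).2.2 b ≤ j + 1))
        = ((doSlide (lam, nu \ lam, f) xs).1 ∪
            (doSlide (lam, nu \ lam, f) xs).2.1.filter
              (fun b => (doSlide (lam, nu \ lam, f) xs).2.2 b ≤ j)) ∪
          (KJdt (α' \ ((doSlide (lam, nu \ lam, f) xs).1 ∪
              (doSlide (lam, nu \ lam, f) xs).2.1.filter
                (fun b => (doSlide (lam, nu \ lam, f) xs).2.2 b ≤ j)))
            ((lam ∪ (nu \ lam).filter (fun b => f b ≤ j + 1)) \ α')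
            (fun _ => 1)).1 →
      α' = lam ∪ (nu \ lam).filter (fun b => f b ≤ j)) := by
  have hinv := slideInvariant hlam hnu hT hxsc
  rw [doSlide_shape_eq hinv j, doSlide_shape_eq hinv (j + 1)]
  have hγα := (hinv j).subset
  have hαβ := tabShape_subset_succ lam nu f j
  have hV := noTwoSameRowCol_tabShape_succ_sdiff hlam hnu hT.1 j
  have hstep := (hinv j).slideShape_succ
  refine ⟨⟨(hinv j).noTwo, hV, (hinv (j + 1)).noTwo, ?_⟩, hstep, ?_⟩
  · rw [hstep, union_sdiff_left]
    exact (noTwoSameRowCol_KJdt_ones (hinv j).isYoung (isYoung_tabShape hlam hnu hT.1 j)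
      (isYoung_tabShape hlam hnu hT.1 (j + 1)) hγα hαβ (hinv j).noTwo hV).mono sdiff_subset
  · intro α' hγα' hα'β hD' _ hrule
    exact (eq_of_union_KJdt_ones_eq hγα hαβ (hinv j).noTwo hγα' hα'β hD'
      (hstep.symm.trans hrule)).symm

/-- the local growth conditions (G1) and (G2) hold on every 2×2
subsquare of a K-theory growth diagram: the top row of the square consists of
the shapes `α = λ ∪ {entries ≤ j}` and `β = λ ∪ {entries ≤ j+1}` of a tableau,
the bottom row of the corresponding shapes `γ, δ` of its K-jdt slide; each of
`α/γ, β/α, β/δ, δ/γ` has no two boxes in a row or column, `δ` is obtained from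
`γ, α, β` by a K-jdt slide of the all-ones filling of `β/α` into `α/γ`, and `α`
is uniquely determined by `γ, δ, β`. -/
theorem stmt12 (lam nu : Finset Box) (f : Box → ℕ) (xs : Finset Box) (j : ℕ)
    (hlam : IsYoung lam) (hnu : IsYoung nu) (hsub : lam ⊆ nu)
    (hT : IsIncTab (nu \ lam) f) (hxs : xs.Nonempty)
    (hxsc : ∀ x ∈ xs, InnerCorner lam x) :
    (NoTwoSameRowCol ((lam ∪ (nu \ lam).filter (fun b => f b ≤ j)) \
        ((doSlide (lam, nu \ lam, f) xs).1 ∪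
          (doSlide (lam, nu \ lam, f) xs).2.1.filter
            (fun b => (doSlide (lam, nu \ lam, f) xs).2.2 b ≤ j))) ∧
      NoTwoSameRowCol ((lam ∪ (nu \ lam).filter (fun b => f b ≤ j + 1)) \
        (lam ∪ (nu \ lam).filter (fun b => f b ≤ j))) ∧
      NoTwoSameRowCol ((lam ∪ (nu \ lam).filter (fun b => f b ≤ j + 1)) \
        ((doSlide (lam, nu \ lam, f) xs).1 ∪
          (doSlide (lam, nu \ lam, f) xs).2.1.filter
            (fun b => (doSlide (lam, nu \ lam, f) xs).2.2 b ≤ j + 1))) ∧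
      NoTwoSameRowCol (((doSlide (lam, nu \ lam, f) xs).1 ∪
          (doSlide (lam, nu \ lam, f) xs).2.1.filter
            (fun b => (doSlide (lam, nu \ lam, f) xs).2.2 b ≤ j + 1)) \
        ((doSlide (lam, nu \ lam, f) xs).1 ∪
          (doSlide (lam, nu \ lam, f) xs).2.1.filter
            (fun b => (doSlide (lam, nu \ lam, f) xs).2.2 b ≤ j)))) ∧
    ((doSlide (lam, nu \ lam, f) xs).1 ∪
        (doSlide (lam, nu \ lam, f) xs).2.1.filter
          (fun b => (doSlide (lam, nu \ lam, f) xs).2.2 b ≤ j + 1))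
      = ((doSlide (lam, nu \ lam, f) xs).1 ∪
          (doSlide (lam, nu \ lam, f) xs).2.1.filter
            (fun b => (doSlide (lam, nu \ lam, f) xs).2.2 b ≤ j)) ∪
        (KJdt ((lam ∪ (nu \ lam).filter (fun b => f b ≤ j)) \
            ((doSlide (lam, nu \ lam, f) xs).1 ∪
              (doSlide (lam, nu \ lam, f) xs).2.1.filter
                (fun b => (doSlide (lam, nu \ lam, f) xs).2.2 b ≤ j)))
          ((lam ∪ (nu \ lam).filter (fun b => f b ≤ j + 1)) \
            (lam ∪ (nu \ lam).filter (fun b => f b ≤ j)))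
          (fun _ => 1)).1 ∧
    (∀ α' : Finset Box,
      ((doSlide (lam, nu \ lam, f) xs).1 ∪
        (doSlide (lam, nu \ lam, f) xs).2.1.filter
          (fun b => (doSlide (lam, nu \ lam, f) xs).2.2 b ≤ j)) ⊆ α' →
      α' ⊆ (lam ∪ (nu \ lam).filter (fun b => f b ≤ j + 1)) →
      NoTwoSameRowCol (α' \ ((doSlide (lam, nu \ lam, f) xs).1 ∪
        (doSlide (lam, nu \ lam, f) xs).2.1.filter
          (fun b => (doSlide (lam, nu \ lam, f) xs).2.2 b ≤ j))) →
      NoTwoSameRowCol ((lam ∪ (nu \ lam).filter (fun b => f b ≤ j + 1)) \ α') →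
      ((doSlide (lam, nu \ lam, f) xs).1 ∪
          (doSlide (lam, nu \ lam, f) xs).2.1.filter
            (fun b => (doSlide (lam, nu \ lam, f) xs).2.2 b ≤ j + 1))
        = ((doSlide (lam, nu \ lam, f) xs).1 ∪
            (doSlide (lam, nu \ lam, f) xs).2.1.filter
              (fun b => (doSlide (lam, nu \ lam, f) xs).2.2 b ≤ j)) ∪
          (KJdt (α' \ ((doSlide (lam, nu \ lam, f) xs).1 ∪
              (doSlide (lam, nu \ lam, f) xs).2.1.filter
                (fun b => (doSlide (lam, nu \ lam, f) xs).2.2 b ≤ j)))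
            ((lam ∪ (nu \ lam).filter (fun b => f b ≤ j + 1)) \ α')
            (fun _ => 1)).1 →
      α' = lam ∪ (nu \ lam).filter (fun b => f b ≤ j)) :=
  stmt12_general lam nu f xs j hlam hnu hT hxsc
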